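/- Let $\iota$ be a finite index type. For each $i \in \iota$, let $K_{x_i x_i}, G_x^i \in \mathbb{R}^{n_x \times n_x}$ with each $G_x^i$ invertible, $K_{x_i u}, G_u^i \in \mathbb{R}^{n_x \times n_u}$, $K_{u x_i} \in \mathbb{R}^{n_u \times n_x}$, and let $K_{uu} \in \mathbb{R}^{n_u \times n_u}$. Define $A_0 := K_{uu}$, $A_i := \begin{bmatrix} K_{x_i x_i} & (G_x^i)^\top \\ G_x^i & 0 \end{bmatrix}$, $B_i := \begin{bmatrix} K_{u x_i} & (G_u^i)^\top \end{bmatrix}$, $B_i' := \begin{bmatrix} K_{x_i u} \\ G_u^i \end{bmatrix}$, the arrowhead matrix $K := \begin{bmatrix} \mathrm{blockdiag}_i(K_{x_i x_i}) & (K_{x_i u})_i \\ (K_{u x_i})_i & K_{uu} \end{bmatrix}$, and $Z := \begin{bmatrix} -G_x^{-1} G_u \\ I \end{bmatrix}$ where $G_x = \mathrm{blockdiag}_i(G_x^i)$ and $G_u = (G_u^i)_i$ stacked. Then the Schur complement $S_{uu} := A_0 - \sum_{i \in \iota} B_i A_i^{-1} B_i'$ equals the reduced matrix: $S_{uu} =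 Z^\top K Z$. -/

import Mathlib

/-!
Eliminating the states through the constraints `Gx x + Gu u = 0`, i.e. `x = -C u` with
`C = Gx⁻¹ Gu`, turns `Zᵀ K Z` into `Kuu - (Cᵀ Kxu + Kux C - Cᵀ Kxx C)`; the arrowhead structure of
`K` splits the bracket into one such term per block. On the other side, the KKT block
`Aᵢ = [Kᵢ Gᵢᵀ; Gᵢ 0]` has the explicit inverse `[0 Gᵢ⁻¹; Gᵢ⁻ᵀ -Gᵢ⁻ᵀ Kᵢ Gᵢ⁻¹]`, with which
`Bᵢ Aᵢ⁻¹ Bᵢ'` is exactly the `i`-th term, for `Cᵢ = Gᵢ⁻¹ Guᵢ`.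
-/

namespace Matrix

variable {ι l m n : Type*} {α : Type*}

/-- Rows are indexed by `m × ι` with the block index second, as in `Matrix.blockDiagonal`. -/
def stackRows (Q : ι → Matrix m n α) : Matrix (m × ι) n α :=
  of fun p j => Q p.2 p.1 j

def stackCols (P : ι → Matrix m n α) : Matrix m (n × ι) α :=
  of fun a p => P p.2 a p.1

lemma transpose_stackRows (Q : ι → Matrix m n α) :
    (stackRows Q)ᵀ = stackCols fun i => (Q i)ᵀ :=
  rfl

section Semiring

variable [Fintype ι] [Fintype m] [NonUnitalNonAssocSemiring α]

lemma stackCols_mul_stackRows (P : ι → Matrix l m α) (Q : ι → Matrix m n α) :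
    stackCols P * stackRows Q = ∑ i, P i * Q i := by
  ext a j
  simp only [mul_apply, sum_apply, stackCols, stackRows, of_apply]
  exact Fintype.sum_prod_type_right _

lemma blockDiagonal_mul_stackRows [DecidableEq ι] (M : ι → Matrix m m α)
    (Q : ι → Matrix m n α) :
    blockDiagonal M * stackRows Q = stackRows fun i => M i * Q i := by
  ext ⟨a, i⟩ j
  simp only [mul_apply, stackRows, of_apply, blockDiagonal_apply, Fintype.sum_prod_type,
    ite_mul, zero_mul, Finset.sum_ite_eq, Finset.mem_univ, if_true]

end Semiring

variable [CommRing α]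

/-- What eliminating the states by `x = -C u` subtracts from the control block. -/
def eliminationTerm [Fintype m] (P : Matrix l m α) (R : Matrix m l α) (K : Matrix m m α)
    (C : Matrix m l α) : Matrix l l α :=
  Cᵀ * R + P * C - Cᵀ * (K * C)

lemma eliminationTerm_stack [Fintype ι] [DecidableEq ι] [Fintype m] (P : ι → Matrix l m α)
    (R : ι → Matrix m l α) (K : ι → Matrix m m α) (C : ι → Matrix m l α) :
    eliminationTerm (stackCols P) (stackRows R) (blockDiagonal K) (stackRows C) =
      ∑ i, eliminationTerm (P i) (R i) (K i) (C i) := by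
  simp only [eliminationTerm, transpose_stackRows, blockDiagonal_mul_stackRows,
    stackCols_mul_stackRows, Finset.sum_add_distrib, Finset.sum_sub_distrib]

lemma transpose_mul_fromBlocks_mul_fromRows_neg_one [Fintype l] [Fintype m] [DecidableEq l]
    (K₁₁ : Matrix m m α) (K₁₂ : Matrix m l α) (K₂₁ : Matrix l m α) (K₂₂ : Matrix l l α)
    (C : Matrix m l α) :
    (fromRows (-C) (1 : Matrix l l α))ᵀ * fromBlocks K₁₁ K₁₂ K₂₁ K₂₂ *
        fromRows (-C) (1 : Matrix l l α) =
      K₂₂ - eliminationTerm K₂₁ K₁₂ K₁₁ C := by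
  simp only [transpose_fromRows, fromCols_mul_fromBlocks, fromCols_mul_fromRows, eliminationTerm,
    transpose_neg, transpose_one, Matrix.neg_mul, Matrix.mul_neg, Matrix.one_mul, Matrix.mul_one,
    Matrix.add_mul, Matrix.mul_assoc]
  abel

variable [Fintype n] [DecidableEq n]

lemma inv_blockDiagonal [Fintype ι] [DecidableEq ι] (M : ι → Matrix n n α)
    (hM : ∀ i, IsUnit (M i).det) :
    (blockDiagonal M)⁻¹ = blockDiagonal fun i => (M i)⁻¹ := by
  refine inv_eq_right_inv ?_
  rw [← blockDiagonal_mul]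
  simp only [mul_nonsing_inv _ (hM _)]
  exact blockDiagonal_one

lemma inv_fromBlocks_transpose_zero₂₂ (K G : Matrix n n α) (hG : IsUnit G.det) :
    (fromBlocks K Gᵀ G 0)⁻¹ = fromBlocks 0 G⁻¹ G⁻¹ᵀ (-(G⁻¹ᵀ * K * G⁻¹)) := by
  have hGt : Gᵀ * G⁻¹ᵀ = 1 := by rw [← transpose_mul, nonsing_inv_mul _ hG, transpose_one]
  refine inv_eq_right_inv ?_
  rw [fromBlocks_multiply, ← fromBlocks_one]
  congr 1
  · simp [hGt]
  · rw [mul_neg, ← Matrix.mul_assoc, ← Matrix.mul_assoc, hGt, Matrix.one_mul, add_neg_cancel]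
  · simp
  · simp [mul_nonsing_inv _ hG]

lemma fromCols_mul_inv_fromBlocks_mul_fromRows [Fintype l] (P : Matrix l n α)
    (Q R : Matrix n l α) (K G : Matrix n n α) (hG : IsUnit G.det) :
    fromCols P Qᵀ * (fromBlocks K Gᵀ G 0)⁻¹ * fromRows R Q =
      eliminationTerm P R K (G⁻¹ * Q) := by
  rw [inv_fromBlocks_transpose_zero₂₂ K G hG, fromCols_mul_fromBlocks, fromCols_mul_fromRows,
    eliminationTerm, transpose_mul]
  simp only [Matrix.mul_zero, zero_add, Matrix.mul_neg, Matrix.add_mul, Matrix.neg_mul,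
    Matrix.mul_assoc]
  abel

end Matrix

open Matrix

/-- The Schur complement `Suu = A₀ - ∑ i, Bᵢ Aᵢ⁻¹ Bᵢ'` of the condensed
block-angular KKT system equals the reduced matrix `Zᵀ K Z`. -/
theorem schur_complement_eq_reduced_matrix {ι : Type*} [Fintype ι] [DecidableEq ι]
    {nx nu : ℕ}
    (Kxx Gxi : ι → Matrix (Fin nx) (Fin nx) ℝ) (hGxi : ∀ i, IsUnit (Gxi i).det)
    (Kxu Gui : ι → Matrix (Fin nx) (Fin nu) ℝ)
    (Kux : ι → Matrix (Fin nu) (Fin nx) ℝ)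
    (Kuu : Matrix (Fin nu) (Fin nu) ℝ)
    (A0 : Matrix (Fin nu) (Fin nu) ℝ) (hA0 : A0 = Kuu)
    (A : ι → Matrix (Fin nx ⊕ Fin nx) (Fin nx ⊕ Fin nx) ℝ)
    (hA : ∀ i, A i = Matrix.fromBlocks (Kxx i) (Gxi i)ᵀ (Gxi i) 0)
    (B : ι → Matrix (Fin nu) (Fin nx ⊕ Fin nx) ℝ)
    (hB : ∀ i, B i = Matrix.fromCols (Kux i) (Gui i)ᵀ)
    (B' : ι → Matrix (Fin nx ⊕ Fin nx) (Fin nu) ℝ)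
    (hB' : ∀ i, B' i = Matrix.fromRows (Kxu i) (Gui i))
    (K : Matrix ((Fin nx × ι) ⊕ Fin nu) ((Fin nx × ι) ⊕ Fin nu) ℝ)
    (hK : K = Matrix.fromBlocks
      (Matrix.blockDiagonal Kxx)
      (Matrix.of fun p j => Kxu p.2 p.1 j)
      (Matrix.of fun a p => Kux p.2 a p.1)
      Kuu)
    (Gx : Matrix (Fin nx × ι) (Fin nx × ι) ℝ) (hGx : Gx = Matrix.blockDiagonal Gxi)
    (Gu : Matrix (Fin nx × ι) (Fin nu) ℝ)
    (hGu : Gu = Matrix.of fun p j => Gui p.2 p.1 j)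
    (Z : Matrix ((Fin nx × ι) ⊕ Fin nu) (Fin nu) ℝ)
    (hZ : Z = Matrix.fromRows (-(Gx⁻¹ * Gu)) 1)
    (Suu : Matrix (Fin nu) (Fin nu) ℝ)
    (hSuu : Suu = A0 - ∑ i, B i * (A i)⁻¹ * B' i) :
    Suu = Zᵀ * K * Z := by
  have hK' : K = fromBlocks (blockDiagonal Kxx) (stackRows Kxu) (stackCols Kux) Kuu := hK
  have hGu' : Gu = stackRows Gui := hGu
  have hC : Gx⁻¹ * Gu = stackRows fun i => (Gxi i)⁻¹ * Gui i := by
    rw [hGx, hGu', inv_blockDiagonal Gxi hGxi, blockDiagonal_mul_stackRows]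
  have hterm : ∀ i, B i * (A i)⁻¹ * B' i =
      eliminationTerm (Kux i) (Kxu i) (Kxx i) ((Gxi i)⁻¹ * Gui i) := fun i => by
    rw [hA, hB, hB', fromCols_mul_inv_fromBlocks_mul_fromRows _ _ _ _ _ (hGxi i)]
  rw [hSuu, hA0, hZ, hK', hC, transpose_mul_fromBlocks_mul_fromRows_neg_one, eliminationTerm_stack,
    Finset.sum_congr rfl fun i _ => hterm i]
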